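/- arXiv:2601.21719 — 2 statements merged into one kernel-verified Lean document; each statement's English description precedes it below -/
import Mathlib

section
/- Let d ≥ 2 and 1 ≤ r ≤ d/2 be integers, let B ∼ Beta(r/2, (d−r)/2), fix η ∈ (0,1), and set α := r(1+η)/d ∈ (0,1). Then ℙ(B > α) ≤ 2·exp(−η² r / 72). -/
open MeasureTheory ProbabilityTheory

/-- The `Beta(a,b)` distribution on `ℝ`, with density proportional to
`x^(a−1) (1−x)^(b−1)` on `(0,1)`. -/
noncomputable def betaMeasure (a b : ℝ) : Measure ℝ :=
  volume.withDensity fun x =>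
    ENNReal.ofReal
      (Set.indicator (Set.Ioo (0 : ℝ) 1)
        (fun t => t ^ (a - 1) * (1 - t) ^ (b - 1)
          / ∫ u in (0 : ℝ)..1, u ^ (a - 1) * (1 - u) ^ (b - 1)) x)

noncomputable def Brl (a b : ℝ) : ℝ := ∫ u in (0:ℝ)..1, u ^ (a - 1) * (1 - u) ^ (b - 1)

lemma Brl_complex (a b : ℝ) :
    ((Brl a b : ℝ) : ℂ) = Complex.betaIntegral a b := by
  rw [Brl, Complex.betaIntegral, ← intervalIntegral.integral_ofReal]
  apply intervalIntegral.integral_congr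
  intro x hx
  rw [Set.uIcc_of_le (by norm_num : (0:ℝ) ≤ 1)] at hx
  obtain ⟨h0, h1⟩ := hx
  push_cast
  rw [Complex.ofReal_cpow h0, Complex.ofReal_cpow (by linarith)]
  push_cast
  ring
lemma Brl_eq_Gamma {a b : ℝ} (ha : 0 < a) (hb : 0 < b) :
    Brl a b = Real.Gamma a * Real.Gamma b / Real.Gamma (a + b) := by
  have hG : Real.Gamma (a + b) ≠ 0 := (Real.Gamma_pos_of_pos (by linarith)).ne'
  have h := Complex.Gamma_mul_Gamma_eq_betaIntegral
    (s := (a:ℂ)) (t := (b:ℂ)) (by simpa using ha) (by simpa using hb)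
  rw [← Brl_complex a b] at h
  have : ((a:ℂ) + b) = ((a + b : ℝ) : ℂ) := by push_cast; ring
  rw [this, Complex.Gamma_ofReal, Complex.Gamma_ofReal, Complex.Gamma_ofReal] at h
  have h2 : ((Real.Gamma a * Real.Gamma b : ℝ) : ℂ) = ((Real.Gamma (a+b) * Brl a b : ℝ) : ℂ) := by
    push_cast; rw [h]
  have h3 := Complex.ofReal_injective h2
  field_simp
  linarith [h3]

lemma intOn (a b : ℝ) (ha : 0 < a) (hb : 0 < b) :
    IntegrableOn (fun x : ℝ => x ^ (a - 1) * (1 - x) ^ (b - 1)) (Set.Ioo 0 1) := by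
  have h := Complex.betaIntegral_convergent (u := (a:ℂ)) (v := (b:ℂ))
    (by simpa using ha) (by simpa using hb)
  rw [intervalIntegrable_iff, Set.uIoc_of_le (by norm_num : (0:ℝ) ≤ 1)] at h
  have hre : IntegrableOn
      (fun x : ℝ => ((x:ℂ) ^ ((a:ℂ) - 1) * (1 - (x:ℂ)) ^ ((b:ℂ) - 1)).re)
      (Set.Ioc 0 1) := h.re
  refine (hre.mono_set Set.Ioo_subset_Ioc_self).congr_fun ?_ measurableSet_Ioo
  intro x hx
  obtain ⟨h0, h1⟩ := hx
  have e1 : ((a:ℂ) - 1) = ((a - 1 : ℝ) : ℂ) := by push_cast; ring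
  have e2 : ((b:ℂ) - 1) = ((b - 1 : ℝ) : ℂ) := by push_cast; ring
  have e3 : (1 - (x:ℂ)) = ((1 - x : ℝ) : ℂ) := by push_cast; ring
  beta_reduce
  rw [e1, e2, e3, ← Complex.ofReal_cpow h0.le, ← Complex.ofReal_cpow (by linarith : (0:ℝ) ≤ 1 - x),
    ← Complex.ofReal_mul, Complex.ofReal_re]
lemma Brl_eq_setInt (a b : ℝ) :
    Brl a b = ∫ x in Set.Ioo (0:ℝ) 1, x ^ (a - 1) * (1 - x) ^ (b - 1) := by
  rw [Brl, intervalIntegral.integral_of_le (by norm_num : (0:ℝ) ≤ 1),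
    integral_Ioc_eq_integral_Ioo]

lemma Brl_pos {a b : ℝ} (ha : 0 < a) (hb : 0 < b) : 0 < Brl a b := by
  rw [Brl_eq_Gamma ha hb]
  exact div_pos (mul_pos (Real.Gamma_pos_of_pos ha) (Real.Gamma_pos_of_pos hb))
    (Real.Gamma_pos_of_pos (by linarith))
lemma Brl_succ {a b : ℝ} (ha : 0 < a) (hb : 0 < b) :
    Brl (a + 1) b = a / (a + b) * Brl a b := by
  rw [Brl_eq_Gamma (by linarith) hb, Brl_eq_Gamma ha hb,
    Real.Gamma_add_one ha.ne', show a + 1 + b = (a + b) + 1 by ring,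
    Real.Gamma_add_one (by positivity : (a+b) ≠ 0)]
  have g1 := (Real.Gamma_pos_of_pos ha).ne'
  have g3 := (Real.Gamma_pos_of_pos (show (0:ℝ) < a + b by linarith)).ne'
  field_simp
lemma Brl_mom {a b : ℝ} (ha : 0 < a) (hb : 0 < b) (k : ℕ) :
    Brl (a + k) b ≤ ((a + k) / (a + b)) ^ k * Brl a b := by
  induction k with
  | zero => simp
  | succ n ih =>
    have hab : (0:ℝ) < a + b := by linarith
    have hn : (0:ℝ) ≤ n := n.cast_nonneg
    have step : Brl (a + ((n:ℝ) + 1)) b = (a + n) / (a + n + b) * Brl (a + n) b := by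
      have := Brl_succ (a := a + n) (b := b) (by linarith) hb
      rw [show a + ((n:ℝ) + 1) = a + (n:ℝ) + 1 by ring]
      exact this
    push_cast
    rw [step]
    have hB := (Brl_pos ha hb).le
    have hBn := (Brl_pos (show (0:ℝ) < a + n by linarith) hb).le
    have h1 : (a + n) / (a + n + b) ≤ (a + n + 1) / (a + b) :=
      div_le_div₀ (by linarith) (by linarith) hab (by linarith)
    have h2 : ((a + n) / (a + b)) ^ n ≤ ((a + n + 1) / (a + b)) ^ n :=
      pow_le_pow_left₀ (by positivity) (div_le_div₀ (by linarith) (by linarith) hab (by linarith)) n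
    calc (a + n) / (a + n + b) * Brl (a + n) b
        ≤ (a + n + 1) / (a + b) * (((a + n) / (a + b)) ^ n * Brl a b) :=
          mul_le_mul h1 ih hBn (by positivity)
      _ ≤ (a + n + 1) / (a + b) * (((a + n + 1) / (a + b)) ^ n * Brl a b) := by
          apply mul_le_mul_of_nonneg_left (mul_le_mul_of_nonneg_right h2 hB) (by positivity)
      _ = ((a + (n + 1)) / (a + b)) ^ (n + 1) * Brl a b := by ring

set_option maxHeartbeats 1000000 in
/-- tail bound for the random capture fraction.  For `d ≥ 2`,
`1 ≤ r ≤ d/2`, `B ∼ Beta(r/2, (d−r)/2)`, `η ∈ (0,1)` and `α = r(1+η)/d`,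
`ℙ(B > α) ≤ 2 exp(−η² r/72)`. -/
theorem stmt17
    (d r : ℕ) (hd : 2 ≤ d) (hr : 1 ≤ r) (hrd : 2 * r ≤ d)
    (η : ℝ) (hη : η ∈ Set.Ioo (0 : ℝ) 1)
    (α : ℝ) (hα : α = (r : ℝ) * (1 + η) / d) :
    _root_.betaMeasure ((r : ℝ) / 2) (((d : ℝ) - r) / 2) {x : ℝ | α < x}
      ≤ ENNReal.ofReal (2 * Real.exp (-(η ^ 2 * r) / 72)) := by
  obtain ⟨hη0, hη1⟩ := hη
  set a : ℝ := (r : ℝ) / 2 with ha_def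
  set b : ℝ := ((d : ℝ) - r) / 2 with hb_def
  have hr1 : (1:ℝ) ≤ (r:ℝ) := by exact_mod_cast hr
  have hrd' : 2 * (r:ℝ) ≤ (d:ℝ) := by exact_mod_cast hrd
  have hd0 : (0:ℝ) < d := by positivity
  have ha : 0 < a := by rw [ha_def]; linarith
  have hb : 0 < b := by rw [hb_def]; linarith
  have hab : a + b = (d:ℝ) / 2 := by rw [ha_def, hb_def]; ring
  have hα0 : 0 < α := by rw [hα]; positivity
  have hα1 : α < 1 := by
    rw [hα, div_lt_one hd0]; nlinarith
  have hC : 0 < Brl a b := Brl_pos ha hb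
  -- the set is Ioi α
  have hset : {x : ℝ | α < x} = Set.Ioi α := rfl
  -- intersection
  have hinter : Set.Ioo (0:ℝ) 1 ∩ Set.Ioi α = Set.Ioo α 1 := by
    ext x
    simp only [Set.mem_inter_iff, Set.mem_Ioo, Set.mem_Ioi]
    exact ⟨fun ⟨⟨_, h1⟩, h2⟩ => ⟨h2, h1⟩, fun ⟨h2, h1⟩ => ⟨⟨hα0.trans h2, h1⟩, h2⟩⟩
  -- integrability on Ioo α 1
  have hsub : Set.Ioo α 1 ⊆ Set.Ioo (0:ℝ) 1 :=
    Set.Ioo_subset_Ioo hα0.le le_rfl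
  have hint : IntegrableOn (fun x : ℝ => x ^ (a - 1) * (1 - x) ^ (b - 1)) (Set.Ioo α 1) :=
    (intOn a b ha hb).mono_set hsub
  have hnn : ∀ x ∈ Set.Ioo (0:ℝ) 1, 0 ≤ x ^ (a - 1) * (1 - x) ^ (b - 1) := by
    intro x hx
    have hx0 : (0:ℝ) < x := hx.1
    have : (0:ℝ) ≤ 1 - x := by linarith [hx.2]
    positivity
  -- compute the measure
  have hmeas : _root_.betaMeasure a b {x : ℝ | α < x}
      = ENNReal.ofReal ((∫ x in Set.Ioo α 1, x ^ (a - 1) * (1 - x) ^ (b - 1)) / Brl a b) := by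
    rw [_root_.betaMeasure, hset, withDensity_apply _ measurableSet_Ioi]
    have hfun : ∀ x : ℝ, ENNReal.ofReal
        (Set.indicator (Set.Ioo (0 : ℝ) 1)
          (fun t => t ^ (a - 1) * (1 - t) ^ (b - 1)
            / ∫ u in (0 : ℝ)..1, u ^ (a - 1) * (1 - u) ^ (b - 1)) x)
        = Set.indicator (Set.Ioo (0 : ℝ) 1)
          (fun t => ENNReal.ofReal (t ^ (a - 1) * (1 - t) ^ (b - 1) / Brl a b)) x := by
      intro x
      by_cases hx : x ∈ Set.Ioo (0:ℝ) 1 <;>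
        simp [Set.indicator_apply, hx, Brl]
    simp only [hfun]
    rw [lintegral_indicator measurableSet_Ioo, Measure.restrict_restrict measurableSet_Ioo,
      hinter, ← ofReal_integral_eq_lintegral_ofReal]
    · congr 1
      exact integral_div _ _
    · exact hint.div_const _
    · filter_upwards [ae_restrict_mem measurableSet_Ioo] with x hx
      exact div_nonneg (hnn x (hsub hx)) hC.le
  rw [hmeas]
  apply ENNReal.ofReal_le_ofReal
  rw [div_le_iff₀ hC]
  -- it remains to bound the real integral
  have hnn_ae : 0 ≤ᵐ[volume.restrict (Set.Ioo (0:ℝ) 1)]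
      fun x : ℝ => x ^ (a - 1) * (1 - x) ^ (b - 1) := by
    filter_upwards [ae_restrict_mem measurableSet_Ioo] with x hx using hnn x hx
  by_cases hcase : η * r ≤ 6
  · -- small case: bound by total mass
    have h1 : (∫ x in Set.Ioo α 1, x ^ (a - 1) * (1 - x) ^ (b - 1)) ≤ Brl a b := by
      rw [Brl_eq_setInt]
      exact setIntegral_mono_set (intOn a b ha hb) hnn_ae (hsub.eventuallyLE)
    have h2 : (1:ℝ) ≤ 2 * Real.exp (-(η ^ 2 * r) / 72) := by
      have he := Real.add_one_le_exp (-(η ^ 2 * (r:ℝ)) / 72)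
      nlinarith [sq_nonneg η, mul_pos hη0 (hη0.trans_le (le_of_eq rfl)),
        mul_le_mul_of_nonneg_left hcase hη0.le, sq_nonneg (η - 1)]
    nlinarith [hC]
  · push_neg at hcase
    set k : ℕ := ⌈η * r / 18⌉₊ with hk_def
    have hk_low : η * r / 18 ≤ (k:ℝ) := Nat.le_ceil _
    have hk_up : (k:ℝ) ≤ η * r / 4 := by
      have h := Nat.ceil_lt_add_one (show (0:ℝ) ≤ η * r / 18 by positivity)
      rw [← hk_def] at h
      linarith
    have hak : 0 < a + (k:ℝ) := by positivity
    have hintk : IntegrableOn (fun x : ℝ => x ^ (a + (k:ℝ) - 1) * (1 - x) ^ (b - 1))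
        (Set.Ioo (0:ℝ) 1) := intOn (a + k) b hak hb
    have hpt : ∀ x ∈ Set.Ioo α 1, x ^ (a - 1) * (1 - x) ^ (b - 1)
        ≤ (α ^ k)⁻¹ * (x ^ (a + (k:ℝ) - 1) * (1 - x) ^ (b - 1)) := by
      intro x hx
      have hx0 : 0 < x := hα0.trans hx.1
      have h1x : (0:ℝ) ≤ 1 - x := by linarith [hx.2]
      have hrw : x ^ (a + (k:ℝ) - 1) = x ^ k * x ^ (a - 1) := by
        rw [← Real.rpow_natCast x k, ← Real.rpow_add hx0]
        ring_nf
      rw [hrw]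
      have hαx : α ^ k ≤ x ^ k := pow_le_pow_left₀ hα0.le hx.1.le k
      have hαk : 0 < α ^ k := pow_pos hα0 k
      rw [inv_mul_eq_div, le_div_iff₀ hαk]
      calc x ^ (a - 1) * (1 - x) ^ (b - 1) * α ^ k
          ≤ x ^ (a - 1) * (1 - x) ^ (b - 1) * x ^ k :=
            mul_le_mul_of_nonneg_left hαx (by positivity)
        _ = x ^ k * x ^ (a - 1) * (1 - x) ^ (b - 1) := by ring
    have hch : (∫ x in Set.Ioo α 1, x ^ (a - 1) * (1 - x) ^ (b - 1))
        ≤ (α ^ k)⁻¹ * (((a + k) / (a + b)) ^ k * Brl a b) := by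
      calc (∫ x in Set.Ioo α 1, x ^ (a - 1) * (1 - x) ^ (b - 1))
          ≤ ∫ x in Set.Ioo α 1, (α ^ k)⁻¹ * (x ^ (a + (k:ℝ) - 1) * (1 - x) ^ (b - 1)) :=
            setIntegral_mono_on hint ((hintk.mono_set hsub).const_mul _)
              measurableSet_Ioo hpt
        _ = (α ^ k)⁻¹ * ∫ x in Set.Ioo α 1, x ^ (a + (k:ℝ) - 1) * (1 - x) ^ (b - 1) :=
            MeasureTheory.integral_const_mul _ _
        _ ≤ (α ^ k)⁻¹ * Brl (a + k) b := by
            apply mul_le_mul_of_nonneg_left _ (by positivity)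
            rw [Brl_eq_setInt]
            apply setIntegral_mono_set hintk _ hsub.eventuallyLE
            filter_upwards [ae_restrict_mem measurableSet_Ioo] with x hx
            have hx0 : 0 < x := hx.1
            have h1x : (0:ℝ) ≤ 1 - x := by linarith [hx.2]
            positivity
        _ ≤ (α ^ k)⁻¹ * (((a + k) / (a + b)) ^ k * Brl a b) :=
            mul_le_mul_of_nonneg_left (Brl_mom ha hb k) (by positivity)
    -- rewrite the Chernoff factor
    have hden : (a + b) * α = (1 + η) * a := by
      rw [hab, ha_def, hα]
      field_simp
    have hρrw : (α ^ k)⁻¹ * ((a + k) / (a + b)) ^ k = ((a + (k:ℝ)) / ((1 + η) * a)) ^ k := by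
      rw [← hden, div_pow, div_pow, mul_pow]
      field_simp
    have hρ0 : (0:ℝ) ≤ (a + (k:ℝ)) / ((1 + η) * a) := by positivity
    have hρle : (a + (k:ℝ)) / ((1 + η) * a) ≤ (1 + η / 2) / (1 + η) := by
      have hnum : a + (k:ℝ) ≤ a * (1 + η / 2) := by
        have : a * (1 + η / 2) = a + η * r / 4 := by rw [ha_def]; ring
        linarith
      have e : a * (1 + η / 2) / (a * (1 + η)) = (1 + η / 2) / (1 + η) :=
        mul_div_mul_left _ _ ha.ne'
      calc (a + (k:ℝ)) / ((1 + η) * a) = (a + (k:ℝ)) / (a * (1 + η)) := by ring_nf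
        _ ≤ a * (1 + η / 2) / (a * (1 + η)) :=
            div_le_div₀ (by positivity) hnum (by positivity) le_rfl
        _ = (1 + η / 2) / (1 + η) := e
    have hexp : (1 + η / 2) / (1 + η) ≤ Real.exp (-(η / 4)) := by
      have h1pη : (0:ℝ) < 1 + η := by linarith
      have e1 : (1 + η / 2) / (1 + η) = 1 - η / 2 / (1 + η) := by
        field_simp
        ring
      have e2 := Real.add_one_le_exp (-(η / 2 / (1 + η)))
      have e3 : -(η / 2 / (1 + η)) ≤ -(η / 4) := by
        have h4 : η / 4 ≤ η / 2 / (1 + η) := by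
          rw [le_div_iff₀ h1pη]
          nlinarith
        linarith
      calc (1 + η / 2) / (1 + η) = 1 + -(η / 2 / (1 + η)) := by rw [e1]; ring
        _ ≤ Real.exp (-(η / 2 / (1 + η))) := by linarith [e2]
        _ ≤ Real.exp (-(η / 4)) := Real.exp_le_exp.mpr e3
    have hpow : ((a + (k:ℝ)) / ((1 + η) * a)) ^ k ≤ Real.exp (-(η ^ 2 * r) / 72) := by
      calc ((a + (k:ℝ)) / ((1 + η) * a)) ^ k ≤ (Real.exp (-(η / 4))) ^ k :=
            pow_le_pow_left₀ hρ0 (hρle.trans hexp) k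
        _ = Real.exp ((k:ℝ) * (-(η / 4))) := by rw [← Real.exp_nat_mul]
        _ ≤ Real.exp (-(η ^ 2 * r) / 72) := by
            apply Real.exp_le_exp.mpr
            nlinarith [mul_le_mul_of_nonneg_right hk_low (by positivity : (0:ℝ) ≤ η / 4)]
    calc (∫ x in Set.Ioo α 1, x ^ (a - 1) * (1 - x) ^ (b - 1))
        ≤ (α ^ k)⁻¹ * (((a + k) / (a + b)) ^ k * Brl a b) := hch
      _ = ((a + (k:ℝ)) / ((1 + η) * a)) ^ k * Brl a b := by rw [← mul_assoc, hρrw]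
      _ ≤ Real.exp (-(η ^ 2 * r) / 72) * Brl a b :=
          mul_le_mul_of_nonneg_right hpow hC.le
      _ ≤ 2 * Real.exp (-(η ^ 2 * r) / 72) * Brl a b := by
          nlinarith [Real.exp_pos (-(η ^ 2 * (r:ℝ)) / 72), hC]
end

section
/- For ε > 0 define T(ε; x) := Φ((−ε − x/2)/√x) + 1 − Φ((ε − x/2)/√x) for x > 0, where Φ is the standard normal CDF. Fix ε > 0, μ > 0, an integer s ≥ 1, η ∈ (0,1), and integers 1 ≤ r ≤ d/2. Set α := (1+η)·r/d and δ_Gauss := T(ε; μ). If T(ε; αμ) ≤ δ_Gauss/2 and r ≥ (72/η²)·ln(4s/δ_Gauss), then T(ε; αμ) + s·(1 − I_α(r/2, (d−r)/2)) ≤ δ_Gauss, where I_α(a,b) denotes the regularized incomplete beta function (the CDF of the Beta(a,b) distribution at α). -/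
open MeasureTheory ProbabilityTheory

/-- Standard normal CDF. -/
noncomputable def Phi (x : ℝ) : ℝ := ((gaussianReal 0 1) (Set.Iic x)).toReal

/-- Gaussian-mechanism privacy curve `T(ε; x) = Φ((−ε − x/2)/√x) + 1 − Φ((ε − x/2)/√x)`. -/
noncomputable def Tcurve (ε x : ℝ) : ℝ :=
  Phi ((-ε - x / 2) / Real.sqrt x) + (1 - Phi ((ε - x / 2) / Real.sqrt x))

/-- Regularized incomplete beta function `I_x(a,b)`: the CDF of the `Beta(a,b)`
distribution at `x`. -/
noncomputable def regIncBeta (a b x : ℝ) : ℝ :=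
  (∫ t in (0 : ℝ)..x, t ^ (a - 1) * (1 - t) ^ (b - 1))
    / ∫ t in (0 : ℝ)..1, t ^ (a - 1) * (1 - t) ^ (b - 1)

lemma master (p q s t : ℝ) (hp : 0 ≤ p) (hq : 0 ≤ q) (hs : 0 < s) (hst : s ≤ t) (ht : t < 1) :
    t^p * (1-t)^q ≤ s^p * (1-s)^q * Real.exp ((t-s)*(p/s - q/(1-s))) := by
  have ht0 : 0 < t := lt_of_lt_of_le hs hst
  have h1t : 0 < 1 - t := by linarith
  have h1s : 0 < 1 - s := by linarith
  have hlog1 : Real.log t ≤ Real.log s + (t-s)/s := by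
    have h := Real.log_le_sub_one_of_pos (show 0 < t/s from div_pos ht0 hs)
    rw [Real.log_div ht0.ne' hs.ne'] at h
    have hts : t/s - 1 = (t-s)/s := by field_simp
    linarith [hts ▸ h]
  have hlog2 : Real.log (1-t) ≤ Real.log (1-s) - (t-s)/(1-s) := by
    have h := Real.log_le_sub_one_of_pos (show 0 < (1-t)/(1-s) from div_pos h1t h1s)
    rw [Real.log_div h1t.ne' h1s.ne'] at h
    have hts : (1-t)/(1-s) - 1 = -((t-s)/(1-s)) := by field_simp; ring
    linarith [hts ▸ h]
  rw [Real.rpow_def_of_pos ht0, Real.rpow_def_of_pos h1t, Real.rpow_def_of_pos hs,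
    Real.rpow_def_of_pos h1s, ← Real.exp_add, ← Real.exp_add, ← Real.exp_add]
  apply Real.exp_le_exp.mpr
  have e1 : (t-s)*(p/s - q/(1-s)) = p*((t-s)/s) - q*((t-s)/(1-s)) := by ring
  nlinarith [mul_le_mul_of_nonneg_left hlog1 hp, mul_le_mul_of_nonneg_left hlog2 hq]

open intervalIntegral in
lemma exp_integral_le (L A B : ℝ) (hL : 0 < L) (_hAB : A ≤ B) :
    ∫ t in A..B, Real.exp (-(L*(t-A))) ≤ 1/L := by
  have hderiv : ∀ t ∈ Set.uIcc A B,
      HasDerivAt (fun t => -(Real.exp (-(L*(t-A)))/L)) (Real.exp (-(L*(t-A)))) t := by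
    intro t _
    have h1 : HasDerivAt (fun t => -(L*(t-A))) (-L) t := by
      simpa using (((hasDerivAt_id t).sub_const A).const_mul L).fun_neg
    have h2 := (Real.hasDerivAt_exp (-(L*(t-A)))).comp t h1
    have h3 := (h2.div_const L).fun_neg
    simp only [Function.comp] at h3
    refine h3.congr_deriv ?_
    rw [mul_neg, neg_div, neg_neg, mul_div_assoc, div_self hL.ne', mul_one]
  have hint : IntervalIntegrable (fun t => Real.exp (-(L*(t-A)))) MeasureTheory.volume A B :=
    (Real.continuous_exp.comp
      ((continuous_const.mul (continuous_id.sub continuous_const)).neg)).intervalIntegrable _ _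
  rw [integral_eq_sub_of_hasDerivAt hderiv hint]
  have h0 : Real.exp (-(L*(A-A))) = 1 := by simp
  rw [h0]
  have h1 : 0 ≤ Real.exp (-(L*(B-A)))/L := div_nonneg (Real.exp_nonneg _) hL.le
  linarith

lemma alg1 (G E L w : ℝ) (hL : L ≠ 0) (hw : w ≠ 0) (hG : G ≠ 0) :
    ((G * E) * (1/L)) / (w * G) = E / (L * w) := by
  field_simp

lemma arithA1 (η c : ℝ) (hη0 : 0 < η) (hη1 : η < 1) (hc0 : 0 < c) (hc2 : 2*c ≤ 1) :
    (1+η)*c < 1 := by nlinarith [mul_pos (show (0:ℝ) < 1 - η by linarith) hc0]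

lemma arithKey (R Dd η t1 x : ℝ) (hηR : 49 < η*R) (h0 : 0 ≤ Dd/2 - 2)
    (ht1Dd : t1*Dd = (1+η/4)*R) (hx1 : t1 ≤ x) (ht11 : t1 ≤ 1) :
    (R/2-1)*(1-x) ≤ ((Dd-R)/2-1)*x := by
  nlinarith [mul_le_mul_of_nonneg_left hx1 h0]

lemma arithNum (η R A V : ℝ) (hV : V = (1+η)*R/2 - 2*A - R/2 + 1)
    (hA1 : A < 1) (hηR : 49 < η*R) (hη1 : η < 1) (hη0 : 0 < η) :
    (11/48)*((1+η)*(η*R)) ≤ V := by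
  nlinarith [mul_le_mul_of_nonneg_right hη1.le (show (0:ℝ) ≤ η*R by linarith)]

lemma arithNum2 (η R t2 V : ℝ) (hV : V = (1+η/2)*R/2 - 2*t2 - R/2 + 1)
    (ht21 : t2 < 1) (hηR : 49 < η*R) (hη1 : η < 1) (hη0 : 0 < η) :
    (11/72)*((1+η/2)*(η*R)) ≤ V := by
  nlinarith [mul_le_mul_of_nonneg_right hη1.le (show (0:ℝ) ≤ η*R by linarith)]

lemma arithShrink (A : ℝ) : A*(1-A) ≤ A := by nlinarith [sq_nonneg A]

lemma arithFinal (x : ℝ) (hx : 49 < x) :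
    Real.exp (-x/72) * Real.exp (-x/16) ≤ 2 * Real.exp (-x/72) * ((11/192)*x) := by
  have hE := Real.exp_pos (-x/72)
  have e16 : Real.exp (-x/16) ≤ 1 := by
    rw [show (1:ℝ) = Real.exp 0 from (Real.exp_zero).symm]
    apply Real.exp_le_exp.mpr; linarith
  nlinarith [mul_le_mul_of_nonneg_left e16 hE.le, mul_lt_mul_of_pos_left hx hE]

set_option maxHeartbeats 4000000 in
lemma beta_tail_real (R Dd η : ℝ) (hη0 : 0 < η) (hη1 : η < 1)
    (hbig : 72 * Real.log 2 < η^2*R) (hD : 2*R ≤ Dd) :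
    1 - regIncBeta (R/2) ((Dd-R)/2) ((1+η)*R/Dd)
      ≤ 2 * Real.exp (-(η^2*R)/72) := by
  have hlog2 : (0.6931471803:ℝ) < Real.log 2 := Real.log_two_gt_d9
  have hx : (49:ℝ) < η^2*R := by nlinarith
  have hη2pos : (0:ℝ) < η^2 := by positivity
  have hR0 : (0:ℝ) < R := by nlinarith
  have hR : (49:ℝ) < R := by
    nlinarith [mul_pos (mul_pos (show (0:ℝ) < 1-η by linarith)
      (show (0:ℝ) < 1+η by linarith)) hR0]
  have hηR : (49:ℝ) < η*R := by
    nlinarith [mul_pos (mul_pos hη0 (show (0:ℝ) < 1-η by linarith)) hR0]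
  have hD0 : (0:ℝ) < Dd := by linarith
  obtain ⟨c, hcdef⟩ : ∃ c : ℝ, c = R/Dd := ⟨_, rfl⟩
  have hc : c*Dd = R := by rw [hcdef]; field_simp
  have hc0 : 0 < c := by rw [hcdef]; positivity
  have hc2 : 2*c ≤ 1 := by
    rw [hcdef, show 2*(R/Dd) = 2*R/Dd from by ring, div_le_one hD0]; linarith
  obtain ⟨p, hpdef⟩ : ∃ p : ℝ, p = R/2 - 1 := ⟨_, rfl⟩
  obtain ⟨q, hqdef⟩ : ∃ q : ℝ, q = (Dd-R)/2 - 1 := ⟨_, rfl⟩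
  have hp : 0 < p := by rw [hpdef]; linarith
  have hq : 0 < q := by rw [hqdef]; linarith
  obtain ⟨A, hAdef⟩ : ∃ A : ℝ, A = (1+η)*R/Dd := ⟨_, rfl⟩
  have hA_c : A = (1+η)*c := by rw [hAdef, hcdef]; ring
  obtain ⟨t1, ht1def⟩ : ∃ t1 : ℝ, t1 = (1+η/4)*c := ⟨_, rfl⟩
  obtain ⟨t2, ht2def⟩ : ∃ t2 : ℝ, t2 = (1+η/2)*c := ⟨_, rfl⟩
  have h01 : 0 < t1 := by rw [ht1def]; positivity
  have h12 : t1 < t2 := by rw [ht1def, ht2def]; linarith [mul_pos hη0 hc0]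
  have h2A : t2 < A := by rw [ht2def, hA_c]; linarith [mul_pos hη0 hc0]
  have hA1 : A < 1 := by
    rw [hA_c]; exact arithA1 η c hη0 hη1 hc0 hc2
  have hA0 : 0 < A := by rw [hA_c]; positivity
  have ht21 : t2 < 1 := by linarith
  have ht20 : 0 < t2 := h01.trans h12
  have hADd : A*Dd = (1+η)*R := by rw [hA_c, mul_assoc, hc]
  have ht1Dd : t1*Dd = (1+η/4)*R := by rw [ht1def, mul_assoc, hc]
  have ht2Dd : t2*Dd = (1+η/2)*R := by rw [ht2def, mul_assoc, hc]
  rw [regIncBeta, show R/2 - 1 = p from hpdef.symm,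
    show (Dd-R)/2 - 1 = q from hqdef.symm, show (1+η)*R/Dd = A from hAdef.symm]
  set g : ℝ → ℝ := fun t => t^p * (1-t)^q with hgdef
  have hgcont : Continuous g := by
    apply Continuous.mul (Real.continuous_rpow_const hp.le)
    exact (Real.continuous_rpow_const hq.le).comp (continuous_const.sub continuous_id)
  have gInt : ∀ a b : ℝ, IntervalIntegrable g volume a b :=
    fun a b => hgcont.intervalIntegrable a b
  have gnn : ∀ t : ℝ, 0 ≤ t → t ≤ 1 → 0 ≤ g t := fun t ht ht' =>
    mul_nonneg (Real.rpow_nonneg ht _) (Real.rpow_nonneg (by linarith) _)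
  have hg2 : 0 < g t2 :=
    mul_pos (Real.rpow_pos_of_pos ht20 _) (Real.rpow_pos_of_pos (by linarith) _)
  -- g is decreasing on [t1, t2]
  have key : ∀ x ∈ Set.Icc t1 t2, g t2 ≤ g x := by
    intro x hx
    obtain ⟨hx1, hx2⟩ := hx
    have hx0 : 0 < x := lt_of_lt_of_le h01 hx1
    have hx1' : x < 1 := lt_of_le_of_lt hx2 ht21
    have hm := master p q x t2 hp.le hq.le hx0 hx2 ht21
    have hexp : (t2-x)*(p/x - q/(1-x)) ≤ 0 := by
      apply mul_nonpos_of_nonneg_of_nonpos (by linarith)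
      rw [sub_nonpos, div_le_div_iff₀ hx0 (by linarith), hpdef, hqdef]
      rw [hpdef, hqdef] at *
      exact arithKey R Dd η t1 x hηR (by linarith) ht1Dd hx1 (by linarith)
    calc g t2 ≤ x^p * (1-x)^q * Real.exp ((t2-x)*(p/x - q/(1-x))) := hm
      _ ≤ x^p * (1-x)^q * 1 := by
          apply mul_le_mul_of_nonneg_left _ (gnn x hx0.le hx1'.le)
          exact Real.exp_le_one_iff.mpr hexp
      _ = g x := by rw [mul_one]
  -- drift lower bound at A
  obtain ⟨Lb, hLbdef⟩ : ∃ Lb : ℝ, Lb = (11/48)*η*Dd := ⟨_, rfl⟩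
  have hLb : 0 < Lb := by rw [hLbdef]; positivity
  have coreA : Lb ≤ q/(1-A) - p/A := by
    have hA0' : A ≠ 0 := ne_of_gt hA0
    have hA1' : (1:ℝ) - A ≠ 0 := by intro h; rw [sub_eq_zero] at h; exact absurd h.symm hA1.ne
    have e : q/(1-A) - p/A = (q*A - p*(1-A))/(A*(1-A)) := by
      field_simp
    rw [e]
    have e2 : q*A - p*(1-A) = (A*Dd)/2 - 2*A - R/2 + 1 := by
      rw [hpdef, hqdef]; ring
    rw [hADd] at e2
    have hnum : (11/24)*(η*R) ≤ q*A - p*(1-A) := by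
      rw [e2]; linarith [hA1, hηR]
    have hnum0 : 0 ≤ q*A - p*(1-A) := by linarith [hnum, hηR]
    have hden : 0 < A*(1-A) := mul_pos hA0 (by linarith)
    have h1 : Lb ≤ (q*A - p*(1-A))/A := by
      rw [le_div_iff₀ hA0]
      have hLbA : Lb*A = (11/48)*((1+η)*(η*R)) := by
        rw [hLbdef]; linear_combination ((11:ℝ)/48*η) * hADd
      rw [hLbA]
      exact arithNum η R A _ e2 hA1 hηR hη1 hη0
    calc Lb ≤ (q*A - p*(1-A))/A := h1
      _ ≤ (q*A - p*(1-A))/(A*(1-A)) :=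
          div_le_div_of_nonneg_left hnum0 hden (arithShrink A)
  -- drift lower bound at t2
  have core2 : (11/72)*η*Dd ≤ q/(1-t2) - p/t2 := by
    have ht20' : t2 ≠ 0 := ne_of_gt ht20
    have ht21' : (1:ℝ) - t2 ≠ 0 := by
      intro h; rw [sub_eq_zero] at h; exact absurd h.symm ht21.ne
    have e : q/(1-t2) - p/t2 = (q*t2 - p*(1-t2))/(t2*(1-t2)) := by
      field_simp
    rw [e]
    have e2 : q*t2 - p*(1-t2) = (t2*Dd)/2 - 2*t2 - R/2 + 1 := by
      rw [hpdef, hqdef]; ring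
    rw [ht2Dd] at e2
    have hnum : (11/48)*(η*R) ≤ q*t2 - p*(1-t2) := by
      rw [e2]; linarith [ht21, hηR]
    have hnum0 : 0 ≤ q*t2 - p*(1-t2) := by linarith [hnum, hηR]
    have hden : 0 < t2*(1-t2) := mul_pos ht20 (by linarith)
    have h1 : (11/72)*η*Dd ≤ (q*t2 - p*(1-t2))/t2 := by
      rw [le_div_iff₀ ht20]
      have hv : (11/72)*η*Dd*t2 = (11/72)*((1+η/2)*(η*R)) := by
        linear_combination ((11:ℝ)/72*η) * ht2Dd
      rw [hv]
      exact arithNum2 η R t2 _ e2 ht21 hηR hη1 hη0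
    calc (11/72)*η*Dd ≤ (q*t2 - p*(1-t2))/t2 := h1
      _ ≤ (q*t2 - p*(1-t2))/(t2*(1-t2)) :=
          div_le_div_of_nonneg_left hnum0 hden (arithShrink t2)
  obtain ⟨EK, hEKdef⟩ : ∃ E : ℝ, E = Real.exp (-((11/144)*(η^2*R))) := ⟨_, rfl⟩
  have hEK0 : 0 < EK := by rw [hEKdef]; positivity
  -- g A ≤ g t2 * EK
  have step2 : g A ≤ g t2 * EK := by
    have hm := master p q t2 A hp.le hq.le ht20 h2A.le hA1
    have hexp : (A-t2)*(p/t2 - q/(1-t2)) ≤ -((11/144)*(η^2*R)) := by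
      have hAt2 : A - t2 = (η/2)*c := by rw [hA_c, ht2def]; ring
      have h2' : (A-t2)*((11/72)*η*Dd) ≤ (A-t2)*(q/(1-t2) - p/t2) :=
        mul_le_mul_of_nonneg_left core2 (by linarith)
      have hval : (A-t2)*((11/72)*η*Dd) = (11/144)*(η^2*R) := by
        rw [hAt2]; linear_combination ((11:ℝ)/144*η^2) * hc
      linarith [h2', hval]
    calc g A ≤ g t2 * Real.exp ((A-t2)*(p/t2 - q/(1-t2))) := hm
      _ ≤ g t2 * EK := by
          rw [hEKdef]
          exact mul_le_mul_of_nonneg_left (Real.exp_le_exp.mpr hexp) hg2.le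
  -- pointwise bound on [A, 1]
  have H : ∀ t ∈ Set.Icc A 1, g t ≤ (g t2 * EK) * Real.exp (-(Lb*(t-A))) := by
    intro t ht
    obtain ⟨htA, ht1'⟩ := ht
    rcases lt_or_eq_of_le ht1' with ht1'' | rfl
    · have hm := master p q A t hp.le hq.le hA0 htA ht1''
      have hexp : (t-A)*(p/A - q/(1-A)) ≤ -(Lb*(t-A)) := by
        have hh := mul_le_mul_of_nonneg_left coreA (show (0:ℝ) ≤ t - A by linarith)
        linarith [hh]
      calc g t ≤ g A * Real.exp ((t-A)*(p/A - q/(1-A))) := hm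
        _ ≤ (g t2 * EK) * Real.exp ((t-A)*(p/A - q/(1-A))) :=
            mul_le_mul_of_nonneg_right step2 (Real.exp_nonneg _)
        _ ≤ (g t2 * EK) * Real.exp (-(Lb*(t-A))) := by
            apply mul_le_mul_of_nonneg_left (Real.exp_le_exp.mpr hexp)
            positivity
    · have h1 : g 1 = 0 := by
        show (1:ℝ)^p * (1-1:ℝ)^q = 0
        rw [sub_self, Real.zero_rpow hq.ne', mul_zero]
      rw [h1]
      positivity
  -- tail integral bound
  have htail : (∫ t in A..(1:ℝ), g t) ≤ (g t2 * EK) * (1/Lb) := by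
    have h1 : (∫ t in A..(1:ℝ), g t)
        ≤ ∫ t in A..(1:ℝ), (g t2 * EK) * Real.exp (-(Lb*(t-A))) := by
      apply intervalIntegral.integral_mono_on hA1.le (gInt A 1) _ H
      apply Continuous.intervalIntegrable
      exact continuous_const.mul (Real.continuous_exp.comp
        ((continuous_const.mul (continuous_id.sub continuous_const)).neg))
    have h2 : (∫ t in A..(1:ℝ), (g t2 * EK) * Real.exp (-(Lb*(t-A))))
        = (g t2 * EK) * ∫ t in A..(1:ℝ), Real.exp (-(Lb*(t-A))) :=
      intervalIntegral.integral_const_mul _ _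
    have h3 := exp_integral_le Lb A 1 hLb hA1.le
    have h4 : (g t2 * EK) * (∫ t in A..(1:ℝ), Real.exp (-(Lb*(t-A))))
        ≤ (g t2 * EK) * (1/Lb) :=
      mul_le_mul_of_nonneg_left h3 (by positivity)
    rw [h2] at h1
    linarith [h1, h4]
  -- chunk lower bound
  have hchunk : (t2-t1) * g t2 ≤ ∫ t in t1..t2, g t := by
    have h1 : (∫ t in t1..t2, (fun _ => g t2) t) ≤ ∫ t in t1..t2, g t :=
      intervalIntegral.integral_mono_on h12.le intervalIntegrable_const (gInt t1 t2) key
    rwa [intervalIntegral.integral_const, smul_eq_mul] at h1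
  -- chunk is below the full integral
  have hchunkD : (∫ t in t1..t2, g t) ≤ ∫ t in (0:ℝ)..1, g t := by
    apply intervalIntegral.integral_mono_interval h01.le h12.le ht21.le
    · filter_upwards [MeasureTheory.ae_restrict_mem measurableSet_Ioc] with t ht
      exact gnn t ht.1.le ht.2
    · exact gInt 0 1
  have hchunkpos : 0 < (t2-t1) * g t2 := mul_pos (by linarith) hg2
  have hDpos : 0 < ∫ t in (0:ℝ)..1, g t := lt_of_lt_of_le hchunkpos (hchunk.trans hchunkD)
  have hsplit : (∫ t in (0:ℝ)..A, g t) + (∫ t in A..(1:ℝ), g t) = ∫ t in (0:ℝ)..1, g t :=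
    intervalIntegral.integral_add_adjacent_intervals (gInt 0 A) (gInt A 1)
  have htail0 : 0 ≤ ∫ t in A..(1:ℝ), g t :=
    intervalIntegral.integral_nonneg hA1.le (fun u hu => gnn u (by linarith [hu.1]) hu.2)
  -- put it together
  have hfrac : 1 - (∫ t in (0:ℝ)..A, g t) / (∫ t in (0:ℝ)..1, g t)
      = (∫ t in A..(1:ℝ), g t) / (∫ t in (0:ℝ)..1, g t) := by
    rw [eq_div_iff hDpos.ne', sub_mul, one_mul, div_mul_cancel₀ _ hDpos.ne',
      sub_eq_iff_eq_add']
    exact hsplit.symm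
  rw [hfrac]
  have hbound1 : (∫ t in A..(1:ℝ), g t) / (∫ t in (0:ℝ)..1, g t)
      ≤ (∫ t in A..(1:ℝ), g t) / ((t2-t1) * g t2) :=
    div_le_div_of_nonneg_left htail0 hchunkpos (hchunk.trans hchunkD)
  have hbound2 : (∫ t in A..(1:ℝ), g t) / ((t2-t1) * g t2)
      ≤ ((g t2 * EK) * (1/Lb)) / ((t2-t1) * g t2) :=
    div_le_div_of_nonneg_right htail hchunkpos.le
  have heq : ((g t2 * EK) * (1/Lb)) / ((t2-t1) * g t2) = EK / (Lb * (t2-t1)) :=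
    alg1 _ _ _ _ hLb.ne' (show t2 - t1 ≠ 0 from by linarith) hg2.ne'
  have hLt : Lb * (t2-t1) = (11/192)*(η^2*R) := by
    have e : t2 - t1 = (η/4)*c := by rw [ht1def, ht2def]; ring
    rw [hLbdef, e]; linear_combination ((11:ℝ)/192*η^2) * hc
  have hfinal : EK / (Lb * (t2-t1)) ≤ 2 * Real.exp (-(η^2*R)/72) := by
    rw [hLt, hEKdef]
    have hsplitexp : Real.exp (-((11/144)*(η^2*R)))
        = Real.exp (-(η^2*R)/72) * Real.exp (-(η^2*R)/16) := by
      rw [← Real.exp_add]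
      congr 1
      ring
    rw [hsplitexp, div_le_iff₀ (by positivity)]
    exact arithFinal (η^2*R) hx
  calc (∫ t in A..(1:ℝ), g t) / (∫ t in (0:ℝ)..1, g t)
      ≤ ((g t2 * EK) * (1/Lb)) / ((t2-t1) * g t2) := le_trans hbound1 hbound2
    _ = EK / (Lb * (t2-t1)) := heq
    _ ≤ 2 * Real.exp (-(η^2*R)/72) := hfinal

/-- improvement over the Gaussian baseline in the small-`r` regime.  With
`α = (1+η) r/d` and `δ_Gauss = T(ε; μ)`, if `T(ε; αμ) ≤ δ_Gauss/2` and
`r ≥ (72/η²) ln(4s/δ_Gauss)`, then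
`T(ε; αμ) + s (1 − I_α(r/2, (d−r)/2)) ≤ δ_Gauss`. -/
theorem stmt18
    (ε μ : ℝ) (hε : 0 < ε) (hμ : 0 < μ)
    (s : ℕ) (hs : 1 ≤ s)
    (η : ℝ) (hη : η ∈ Set.Ioo (0 : ℝ) 1)
    (r d : ℕ) (hr : 1 ≤ r) (hrd : 2 * r ≤ d)
    (α : ℝ) (hα : α = (1 + η) * r / d)
    (δGauss : ℝ) (hδGauss : δGauss = Tcurve ε μ)
    (h1 : Tcurve ε (α * μ) ≤ δGauss / 2)
    (h2 : (72 / η ^ 2) * Real.log (4 * s / δGauss) ≤ (r : ℝ)) :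
    Tcurve ε (α * μ) + s * (1 - regIncBeta ((r : ℝ) / 2) (((d : ℝ) - r) / 2) α)
      ≤ δGauss := by
  obtain ⟨hη0, hη1⟩ := hη
  have hPhi_le : ∀ x : ℝ, Phi x ≤ 1 := by
    intro x
    have h := ENNReal.toReal_mono ENNReal.one_ne_top
      (prob_le_one (μ := gaussianReal 0 1) (s := Set.Iic x))
    simpa [Phi] using h
  have hPhi_pos : ∀ x : ℝ, 0 < Phi x := by
    intro x
    rw [Phi]
    have hne : (gaussianReal 0 1) (Set.Iic x) ≠ 0 := by
      intro h0
      have h1' := gaussianReal_absolutelyContinuous' 0 one_ne_zero h0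
      rw [Real.volume_Iic] at h1'
      exact ENNReal.top_ne_zero h1'
    exact ENNReal.toReal_pos hne (measure_ne_top _ _)
  have hδpos : 0 < δGauss := by
    rw [hδGauss, Tcurve]
    have ha := hPhi_pos ((-ε - μ / 2) / Real.sqrt μ)
    have hb := hPhi_le ((ε - μ / 2) / Real.sqrt μ)
    linarith
  have hs1 : (1:ℝ) ≤ (s:ℝ) := by exact_mod_cast hs
  have hs0 : (0:ℝ) < (s:ℝ) := by linarith
  have hr1 : (1:ℝ) ≤ (r:ℝ) := by exact_mod_cast hr
  have hrdR : 2*(r:ℝ) ≤ (d:ℝ) := by exact_mod_cast hrd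
  have hd0 : (0:ℝ) < (d:ℝ) := by linarith
  -- key consequence of h2
  have hη2 : (0:ℝ) < η^2 := by positivity
  have hlog : Real.log (4*s/δGauss) ≤ η^2*(r:ℝ)/72 := by
    have h := mul_le_mul_of_nonneg_left h2 (le_of_lt (show (0:ℝ) < η^2/72 by positivity))
    calc Real.log (4*s/δGauss)
        = (η^2/72) * ((72/η^2) * Real.log (4*s/δGauss)) := by
          field_simp
      _ ≤ (η^2/72) * r := h
      _ = η^2*(r:ℝ)/72 := by ring
  have h4s : (0:ℝ) < 4*s/δGauss := by positivity
  have hexp1 : 4*s/δGauss ≤ Real.exp (η^2*(r:ℝ)/72) := (Real.log_le_iff_le_exp h4s).mp hlog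
  have key : Real.exp (-(η^2*(r:ℝ))/72) ≤ δGauss/(4*s) := by
    rw [show δGauss/(4*(s:ℝ)) = (4*(s:ℝ)/δGauss)⁻¹ from (inv_div _ _).symm,
        show -(η^2*(r:ℝ))/72 = -(η^2*(r:ℝ)/72) from by ring, Real.exp_neg]
    exact inv_anti₀ h4s hexp1
  -- nonnegativity of the regularized incomplete beta function
  have hα0 : 0 ≤ α := by
    rw [hα]; positivity
  have hα1 : α ≤ 1 := by
    rw [hα, div_le_one hd0]
    nlinarith [mul_le_mul_of_nonneg_right hη1.le (show (0:ℝ) ≤ (r:ℝ) by positivity)]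
  have hI0 : 0 ≤ regIncBeta ((r : ℝ) / 2) (((d : ℝ) - r) / 2) α := by
    apply div_nonneg
    · apply intervalIntegral.integral_nonneg hα0
      intro u hu
      exact mul_nonneg (Real.rpow_nonneg hu.1 _)
        (Real.rpow_nonneg (by linarith [hu.2]) _)
    · apply intervalIntegral.integral_nonneg (by norm_num)
      intro u hu
      exact mul_nonneg (Real.rpow_nonneg hu.1 _)
        (Real.rpow_nonneg (by linarith [hu.2]) _)
  -- main bound
  have hmain : 1 - regIncBeta ((r : ℝ) / 2) (((d : ℝ) - r) / 2) α
      ≤ 2 * Real.exp (-(η^2*(r:ℝ))/72) := by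
    rcases le_or_gt (η^2*(r:ℝ)) (72*Real.log 2) with hcase | hcase
    · have hmono : Real.exp (-(Real.log 2)) ≤ Real.exp (-(η^2*(r:ℝ))/72) := by
        apply Real.exp_le_exp.mpr
        have : 0 < Real.log 2 := Real.log_pos (by norm_num)
        linarith
      rw [Real.exp_neg, Real.exp_log (by norm_num : (0:ℝ) < 2)] at hmono
      have : (1:ℝ)/2 ≤ Real.exp (-(η^2*(r:ℝ))/72) := by
        rw [one_div]; exact hmono
      linarith [hI0]
    · rw [hα]
      exact beta_tail_real (r:ℝ) (d:ℝ) η hη0 hη1 hcase hrdR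
  -- conclude
  have hfinal2 : (s:ℝ) * (1 - regIncBeta ((r : ℝ) / 2) (((d : ℝ) - r) / 2) α)
      ≤ δGauss/2 := by
    have hc1 : (s:ℝ) * (1 - regIncBeta ((r : ℝ) / 2) (((d : ℝ) - r) / 2) α)
        ≤ (s:ℝ) * (2 * Real.exp (-(η^2*(r:ℝ))/72)) :=
      mul_le_mul_of_nonneg_left hmain (by positivity)
    have hc2 : (s:ℝ) * (2 * Real.exp (-(η^2*(r:ℝ))/72))
        ≤ (s:ℝ) * (2 * (δGauss/(4*s))) :=
      mul_le_mul_of_nonneg_left (by linarith [key]) (by positivity)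
    have hc3 : (s:ℝ) * (2 * (δGauss/(4*s))) = δGauss/2 := by
      field_simp
      ring
    linarith
  linarith [h1, hfinal2]
end
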